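/- arXiv:1412.8207 — 2 statements merged into one kernel-verified Lean document; each statement's English description precedes it below -/
import Mathlib

section
/- Let Γ be a connected graph and let D ∈ ℝ^{Vert(Γ)} be a zero-sum vector. Then for all μ₁, …, μ_n ∈ ℝ_{>0}^{Ed(Γ)} one has 0 ≤ g(Γ, Σ_{j=1}^n μ_j; D, D) − Σ_{j=1}^n g(Γ, μ_j; D, D) ≤ ‖D‖² · min_{i ∈ {1,…,n}} Σ_{j ≠ i} |μ_j|₁. -/
open Classical
open scoped BigOperators

/-- A graph: a finite set of vertices, a finite set of edges, and a map assigning to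
each edge its unordered pair of endpoints (loops and parallel edges allowed). -/
structure RGraph where
  V : Type
  E : Type
  [fintV : Fintype V]
  [decV : DecidableEq V]
  [fintE : Fintype E]
  [decE : DecidableEq E]
  ends : E → Sym2 V

attribute [instance] RGraph.fintV RGraph.decV RGraph.fintE RGraph.decE

namespace RGraph

variable (G : RGraph)

/-- The Laplacian of the resistive network `(G, μ)` applied to a voltage assignment `v`:
`(L v) i = Σ_j Σ_{edges e : i → j} (v i − v j) / μ e`. -/
noncomputable def lap (μ : G.E → ℝ) (v : G.V → ℝ) : G.V → ℝ := fun i =>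
  ∑ j : G.V, ∑ e : G.E, if G.ends e = s(i, j) then (v i - v j) / μ e else 0

/-- `i` and `j` are joined by an edge belonging to `F`. -/
def Adj (F : Set G.E) (i j : G.V) : Prop := ∃ e ∈ F, G.ends e = s(i, j)

/-- `i` and `j` lie in the same connected component of the subgraph `Γ|_F`
(the subgraph with all vertices of `Γ` and edge set `F`). -/
def Reach (F : Set G.E) (i j : G.V) : Prop := Relation.EqvGen (G.Adj F) i j

/-- The subgraph `Γ|_F` is connected. -/
def ConnOn (F : Set G.E) : Prop := ∀ i j : G.V, G.Reach F i j

/-- The graph `G` is connected. -/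
def Connected : Prop := G.ConnOn Set.univ

/-- The set of connected components of the subgraph `Γ|_F`. -/
def Comp (F : Set G.E) : Type := Quotient (Relation.EqvGen.setoid (G.Adj F))

/-- A walk from `i` to `j`: a finite sequence of vertices together with a choice of an
edge from each vertex to the next. -/
inductive Walk : G.V → G.V → Type
  | nil (i : G.V) : Walk i i
  | cons {i j k : G.V} (e : G.E) (he : G.ends e = s(i, j)) (w : Walk j k) : Walk i k

namespace Walk

variable {G}

/-- The list of vertices visited by a walk, in order (starting vertex first). -/
def vertices : ∀ {i j : G.V}, G.Walk i j → List G.V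
  | _, _, .nil a => [a]
  | _, _, @Walk.cons _ a _ _ _ _ w => a :: vertices w

/-- The list of edges traversed by a walk, in order. -/
def edges : ∀ {i j : G.V}, G.Walk i j → List G.E
  | _, _, .nil _ => []
  | _, _, .cons e _ w => e :: edges w

/-- The list of steps `(source, edge, target)` of a walk. -/
def steps : ∀ {i j : G.V}, G.Walk i j → List (G.V × G.E × G.V)
  | _, _, .nil _ => []
  | _, _, @Walk.cons _ a b _ e _ w => (a, e, b) :: steps w

/-- All edges of the walk lie in the edge set `F`. -/
def In {i j : G.V} (w : G.Walk i j) (F : Set G.E) : Prop := ∀ e ∈ w.edges, e ∈ F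

/-- A path: a walk all of whose vertices are distinct, except possibly the start and the
end vertex (and which does not traverse any edge twice). -/
def IsPath {i j : G.V} (w : G.Walk i j) : Prop :=
  w.vertices.dropLast.Nodup ∧ w.vertices.tail.Nodup ∧ w.edges.Nodup

/-- Change the (definitionally equal) endpoints of a walk. -/
def copy : ∀ {i j i' j' : G.V}, G.Walk i j → i = i' → j = j' → G.Walk i' j'
  | _, _, _, _, w, rfl, rfl => w

variable (G)

end Walk

/-- `F` is cycle-free: the subgraph `Γ|_F` contains no cycle, i.e. every closed path
with edges in `F` is trivial. -/
def CycleFree (F : Set G.E) : Prop :=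
  ∀ (i : G.V) (w : G.Walk i i), w.In F → w.IsPath → w.edges = []

/-- `T` is a spanning tree of `G`: the subgraph `Γ|_T` is connected and cycle-free. -/
def IsSpanningTree (T : Set G.E) : Prop := G.ConnOn T ∧ G.CycleFree T

/-- `F` is a 2-forest: `Γ|_F` is cycle-free with exactly two connected components. -/
def IsTwoForest (F : Set G.E) : Prop := G.CycleFree F ∧ Nat.card (G.Comp F) = 2

/-- `M` is a maximal forest of the subgraph `Γ|_S`: it is a cycle-free subset of `S`
containing a spanning tree of each connected component of `Γ|_S` (equivalently,
inducing the same connected components as `S`). -/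
def IsMaxForestOf (M S : Set G.E) : Prop :=
  M ⊆ S ∧ G.CycleFree M ∧ ∀ i j : G.V, G.Reach S i j ↔ G.Reach M i j

/-- The sign `σ(i,j;k,ℓ;F)` attached to a 2-forest `F`: `+1` if one component of `Γ|_F`
contains `i` and `k` and the other contains `j` and `ℓ`; `-1` if one component contains
`i` and `ℓ` and the other contains `j` and `k`; `0` otherwise. -/
noncomputable def sigma2 (F : Set G.E) (i j k l : G.V) : ℝ :=
  if ¬ G.Reach F i j ∧ G.Reach F i k ∧ G.Reach F j l then 1
  else if ¬ G.Reach F i j ∧ G.Reach F i l ∧ G.Reach F j k then -1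
  else 0

end RGraph

namespace RGraph

variable (G : RGraph)

/-- An oriented edge: an edge together with an ordering of its endpoints. -/
def OEdge : Type := {x : G.E × G.V × G.V // G.ends x.1 = s(x.2.1, x.2.2)}

noncomputable instance : Fintype G.OEdge := Subtype.fintype _

namespace OEdge

variable {G}

/-- The underlying edge of an oriented edge. -/
def edge (o : G.OEdge) : G.E := o.1.1

/-- The source of an oriented edge. -/
def src (o : G.OEdge) : G.V := o.1.2.1

/-- The target of an oriented edge. -/
def tgt (o : G.OEdge) : G.V := o.1.2.2

/-- The reversal of an oriented edge. -/
def rev (o : G.OEdge) : G.OEdge := ⟨(o.1.1, o.1.2.2, o.1.2.1), o.2.trans Sym2.eq_swap⟩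

end OEdge

/-- An edge current assignment: a real-valued function on oriented edges with
`I(e : i → j) = −I(e : j → i)`. -/
def IsCurrent (I : G.OEdge → ℝ) : Prop := ∀ o : G.OEdge, I o.rev = - I o

/-- The edge current assignment `I` is consistent with the vertex current assignment `D`:
for every vertex `i`, `Σ_j Σ_{edges e : i → j} I(e : i → j) = D i`. -/
def Consistent (I : G.OEdge → ℝ) (D : G.V → ℝ) : Prop :=
  ∀ x : G.V, (∑ o ∈ Finset.univ.filter (fun o : G.OEdge => o.src = x), I o) = D x

lemma exists_oedge (e : G.E) : ∃ o : G.OEdge, o.edge = e := by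
  have h : ∀ z : Sym2 G.V, G.ends e = z → ∃ o : G.OEdge, o.edge = e := by
    refine Sym2.ind (fun a b h => ?_)
    exact ⟨⟨(e, a, b), h⟩, rfl⟩
  exact h (G.ends e) rfl

/-- A choice of orientation for each edge. -/
noncomputable def orient (e : G.E) : G.OEdge := Classical.choose (G.exists_oedge e)

lemma orient_edge (e : G.E) : (G.orient e).edge = e := Classical.choose_spec (G.exists_oedge e)

/-- The power dissipated by an edge current assignment: `Σ_{e ∈ Ed(Γ)} μ(e) I(e)²`. -/
noncomputable def power (μ : G.E → ℝ) (I : G.OEdge → ℝ) : ℝ :=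
  ∑ e : G.E, μ e * (I (G.orient e)) ^ 2

/-- The Green's function `g(Γ, μ; D, E) = Dᵀ v` for any `v` with `L v = E`
(for `Γ` connected, `μ` proper, and `D`, `E` zero-sum vectors, such a `v` exists and
`Dᵀ v` does not depend on the choice). -/
noncomputable def green (μ : G.E → ℝ) (D E : G.V → ℝ) : ℝ :=
  if h : ∃ v : G.V → ℝ, G.lap μ v = E then ∑ x : G.V, D x * Classical.choose h x else 0

/-- The contracted graph `Γ/S`: identify the two endpoints of each edge in `S` and
delete the edges in `S`. -/
noncomputable def contract (S : Set G.E) : RGraph :=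
  letI : DecidableEq (Quotient (Relation.EqvGen.setoid (G.Adj S))) := Classical.decEq _
  letI : DecidablePred (· ∈ S) := Classical.decPred _
  { V := Quotient (Relation.EqvGen.setoid (G.Adj S))
    E := {e : G.E // e ∉ S}
    ends := fun e => (G.ends e.1).map (Quotient.mk (Relation.EqvGen.setoid (G.Adj S))) }

/-- The quotient map `[·] : Vert(Γ) → Vert(Γ/S)`. -/
noncomputable def cmk (S : Set G.E) (x : G.V) : (G.contract S).V :=
  Quotient.mk (Relation.EqvGen.setoid (G.Adj S)) x

/-- The edge of `Γ` underlying an edge of `Γ/S` (recall `Ed(Γ/S) = Ed(Γ)∖S`). -/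
noncomputable def cval (S : Set G.E) (e : (G.contract S).E) : G.E := e.1

/-- The subset of `Ed(Γ/S) = Ed(Γ)∖S` induced by a subset `F ⊆ Ed(Γ)`, namely `F∖S`. -/
noncomputable def cset (S : Set G.E) (F : Set G.E) : Set (G.contract S).E :=
  {e : (G.contract S).E | G.cval S e ∈ F}

/-- The linear map `[·] : ℝ^{Vert(Γ)} → ℝ^{Vert(Γ/S)}` sending the basis vector `e_i`
to `e_{[i]}`. -/
noncomputable def pushVec (S : Set G.E) (D : G.V → ℝ) : (G.contract S).V → ℝ := fun x =>
  ∑ i ∈ Finset.univ.filter (fun i : G.V => G.cmk S i = x), D i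

/-- Contraction of walks: delete from a walk in `Γ` the edges belonging to `S`,
obtaining a walk in `Γ/S`. -/
noncomputable def contractWalk (S : Set G.E) :
    ∀ {i j : G.V}, G.Walk i j → (G.contract S).Walk (G.cmk S i) (G.cmk S j)
  | _, _, .nil a => .nil (G.cmk S a)
  | _, _, @Walk.cons _ a b _ e he w =>
    if hS : e ∈ S then
      (contractWalk S w).copy
        (Quotient.sound (Relation.EqvGen.rel b a ⟨e, hS, he.trans Sym2.eq_swap⟩)) rfl
    else
      Walk.cons (j := G.cmk S b) ⟨e, hS⟩
        (by show Sym2.map _ (G.ends e) = s(G.cmk S a, G.cmk S b)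
            rw [he]
            exact Sym2.map_pair_eq _ a b) (contractWalk S w)

/-- The current `I_{Γ|_T}(e : i → j)` flowing along the oriented edge `e : i → j` when a
unit current from `k` to `ℓ` is imposed on the spanning tree `Γ|_T`: it is `+1` if `e ∈ T`
and the unique path in `Γ|_T` from `k` to `ℓ` traverses `e` from `i` to `j`, `−1` if it
traverses `e` from `j` to `i`, and `0` otherwise. -/
noncomputable def treeCurrent (T : Set G.E) (k l : G.V) (e : G.E) (i j : G.V) : ℝ :=
  if e ∈ T ∧ ∃ w : G.Walk k l, w.IsPath ∧ w.In T ∧ (i, e, j) ∈ w.steps then 1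
  else if e ∈ T ∧ ∃ w : G.Walk k l, w.IsPath ∧ w.In T ∧ (j, e, i) ∈ w.steps then -1
  else 0

/-- The extended Green's function on possibly improper resistances: contract the edges of
zero resistance and take the Green's function of the resulting proper network, with the
pushed-forward vertex vectors. -/
noncomputable def egreen (μ : G.E → ℝ) (D E : G.V → ℝ) : ℝ :=
  (G.contract {e : G.E | μ e = 0}).green (fun e => μ (G.cval {e : G.E | μ e = 0} e))
    (G.pushVec {e : G.E | μ e = 0} D) (G.pushVec {e : G.E | μ e = 0} E)

end RGraph

/-! Write `g(μ) = Σ_x D x w x` where `L_μ w = D`. Thomson's principle bounds `g(μ)` by the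
energy `Σ_e μ(e) I(e)²` of any current `I` consistent with `D`, with equality for the current
`I = dw / μ` of the network itself. Feeding the current of `Σ_j μ_j` into each network `μ_j`
gives `Σ_j g(μ_j) ≤ g(Σ_j μ_j)`. Feeding the current `J` of `μ_i` into `Σ_j μ_j` gives
`g(Σ_j μ_j) ≤ g(μ_i) + Σ_{j ≠ i} Σ_e μ_j(e) J(e)²`, and `|J(e)| ≤ ‖D‖` because all of the current
through `e` crosses the cut separating the vertices of higher potential from the others. -/

lemma Sym2.sum_sum_ite_eq_mk_le {α : Type*} [Fintype α] [DecidableEq α] (z : Sym2 α) {r : ℝ}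
    (hr : 0 ≤ r) : (∑ x : α, ∑ y : α, if z = s(x, y) then r else 0) ≤ 2 * r := by
  induction z using Sym2.ind with
  | _ a b =>
    calc (∑ x : α, ∑ y : α, if s(a, b) = s(x, y) then r else 0)
        ≤ ∑ x : α, ∑ y : α,
            ((if x = a ∧ y = b then r else 0) + (if x = b ∧ y = a then r else 0)) := by
          gcongr with x _ y _
          simp only [Sym2.eq_iff]
          split_ifs <;> grind
      _ = 2 * r := by simp [Finset.sum_add_distrib, ite_and]; ring

lemma Finset.sum_sum_eq_zero_of_antisymm {α : Type*} (A : Finset α) {f : α → α → ℝ}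
    (hf : ∀ x y, f y x = -f x y) : ∑ x ∈ A, ∑ y ∈ A, f x y = 0 := by
  have h : ∑ x ∈ A, ∑ y ∈ A, f x y = -∑ x ∈ A, ∑ y ∈ A, f x y := by
    conv_lhs => rw [Finset.sum_comm]
    rw [← Finset.sum_neg_distrib]
    refine Finset.sum_congr rfl fun x _ => ?_
    rw [← Finset.sum_neg_distrib]
    exact Finset.sum_congr rfl fun y _ => hf x y
  linarith

lemma two_mul_mul_mul_le_of_sq_le {a b c p q : ℝ} (ha : 0 ≤ a) (hb : 0 ≤ b)
    (hc : c ^ 2 ≤ a * b) : 2 * (c * p * q) ≤ a * p ^ 2 + b * q ^ 2 := by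
  rcases ha.eq_or_lt with rfl | ha
  · have hc0 : c = 0 := by nlinarith
    subst hc0
    nlinarith
  · -- `a * (a p² + b q² - 2 c p q) = (a p - c q)² + (a b - c²) q²`
    refine le_of_mul_le_mul_left ?_ ha
    nlinarith [sq_nonneg (a * p - c * q), mul_nonneg (sub_nonneg.2 hc) (sq_nonneg q)]

namespace RGraph

variable {G : RGraph}

variable (G) in
/-- Every edge is counted once for each ordering of its endpoints, so this is twice the
Dirichlet form `Σ_e c(e) (u i − u j) (z i − z j)`. -/
noncomputable def dirichletForm (c : G.E → ℝ) (u z : G.V → ℝ) : ℝ :=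
  ∑ x : G.V, ∑ y : G.V, ∑ e : G.E,
    if G.ends e = s(x, y) then c e * (u x - u y) * (z x - z y) else 0

variable (G) in
noncomputable def current (μ : G.E → ℝ) (u : G.V → ℝ) (x y : G.V) : ℝ :=
  ∑ e : G.E, if G.ends e = s(x, y) then (u x - u y) / μ e else 0

section Current

variable {μ : G.E → ℝ} {u : G.V → ℝ}

lemma lap_eq_sum_current (x : G.V) : G.lap μ u x = ∑ y, G.current μ u x y := rfl

lemma current_swap (x y : G.V) : G.current μ u y x = -G.current μ u x y := by
  rw [current, current, ← Finset.sum_neg_distrib]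
  refine Finset.sum_congr rfl fun e _ => ?_
  rw [Sym2.eq_swap]
  split_ifs <;> ring

lemma current_nonneg (hμ : ∀ e, 0 ≤ μ e) {x y : G.V} (hxy : u y ≤ u x) :
    0 ≤ G.current μ u x y :=
  Finset.sum_nonneg fun e _ => by
    split_ifs
    exacts [div_nonneg (sub_nonneg.2 hxy) (hμ e), le_rfl]

lemma div_le_current (hμ : ∀ e, 0 ≤ μ e) {e : G.E} {x y : G.V} (he : G.ends e = s(x, y))
    (hxy : u y ≤ u x) : (u x - u y) / μ e ≤ G.current μ u x y := by
  have hterm : ∀ e', 0 ≤ if G.ends e' = s(x, y) then (u x - u y) / μ e' else 0 := fun e' => by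
    split_ifs
    exacts [div_nonneg (sub_nonneg.2 hxy) (hμ e'), le_rfl]
  simpa [he, current] using Finset.single_le_sum (fun e' _ => hterm e') (Finset.mem_univ e)

lemma sum_lap_eq_sum_current_compl (A : Finset G.V) :
    ∑ x ∈ A, G.lap μ u x = ∑ x ∈ A, ∑ y ∈ Aᶜ, G.current μ u x y := by
  have hsplit : ∀ x, G.lap μ u x = ∑ y ∈ A, G.current μ u x y + ∑ y ∈ Aᶜ, G.current μ u x y :=
    fun x => (Finset.sum_add_sum_compl A _).symm
  simp only [hsplit, Finset.sum_add_distrib,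
    Finset.sum_sum_eq_zero_of_antisymm A current_swap, zero_add]

/-- All of the current through `e` crosses the cut between the vertices of potential above
`u y` and the others, and the net current across that cut is at most `‖D‖`. -/
lemma div_le_sum_posPart_of_lap_eq (hμ : ∀ e, 0 ≤ μ e) {D : G.V → ℝ} (hu : G.lap μ u = D)
    {e : G.E} {x y : G.V} (he : G.ends e = s(x, y)) :
    (u x - u y) / μ e ≤ ∑ i : G.V, max 0 (D i) := by
  have hnorm : (0 : ℝ) ≤ ∑ i : G.V, max 0 (D i) := Finset.sum_nonneg fun i _ => le_max_left _ _
  by_cases hxy : u x ≤ u y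
  · exact (div_nonpos_of_nonpos_of_nonneg (sub_nonpos.2 hxy) (hμ e)).trans hnorm
  set A := Finset.univ.filter fun i => u y < u i
  have hxA : x ∈ A := by simpa [A] using hxy
  have hyA : y ∈ Aᶜ := by simp [A]
  have hcut : ∀ i ∈ A, ∀ j ∈ Aᶜ, 0 ≤ G.current μ u i j := fun i hi j hj =>
    current_nonneg hμ (by simp only [A, Finset.mem_compl, Finset.mem_filter] at hi hj; grind)
  calc (u x - u y) / μ e ≤ G.current μ u x y := div_le_current hμ he (not_le.1 hxy).le
    _ ≤ ∑ j ∈ Aᶜ, G.current μ u x j := Finset.single_le_sum (hcut x hxA) hyA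
    _ ≤ ∑ i ∈ A, ∑ j ∈ Aᶜ, G.current μ u i j :=
        Finset.single_le_sum (f := fun i => ∑ j ∈ Aᶜ, G.current μ u i j)
          (fun i hi => Finset.sum_nonneg (hcut i hi)) hxA
    _ = ∑ i ∈ A, D i := by rw [← sum_lap_eq_sum_current_compl, hu]
    _ ≤ ∑ i ∈ A, max 0 (D i) := Finset.sum_le_sum fun i _ => le_max_right _ _
    _ ≤ ∑ i : G.V, max 0 (D i) :=
        Finset.sum_le_sum_of_subset_of_nonneg (Finset.subset_univ A)
          fun i _ _ => le_max_left _ _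

lemma sq_div_le_sq_sum_posPart_of_lap_eq (hμ : ∀ e, 0 ≤ μ e) {D : G.V → ℝ}
    (hu : G.lap μ u = D) {e : G.E} {x y : G.V} (he : G.ends e = s(x, y)) :
    ((u x - u y) / μ e) ^ 2 ≤ (∑ i : G.V, max 0 (D i)) ^ 2 := by
  have hyx := div_le_sum_posPart_of_lap_eq hμ hu (he.trans Sym2.eq_swap)
  rw [← neg_sub, neg_div] at hyx
  exact sq_le_sq' (neg_le.1 hyx) (div_le_sum_posPart_of_lap_eq hμ hu he)

end Current

section DirichletForm

variable {c : G.E → ℝ} {u z : G.V → ℝ}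

lemma dirichletForm_inv_eq_sum_current (μ : G.E → ℝ) (u z : G.V → ℝ) :
    G.dirichletForm (fun e => (μ e)⁻¹) u z = ∑ x, ∑ y, G.current μ u x y * (z x - z y) := by
  simp only [dirichletForm, current, Finset.sum_mul]
  refine Finset.sum_congr rfl fun x _ => Finset.sum_congr rfl fun y _ =>
    Finset.sum_congr rfl fun e _ => ?_
  split_ifs <;> ring

lemma dirichletForm_inv_eq (μ : G.E → ℝ) (u z : G.V → ℝ) :
    G.dirichletForm (fun e => (μ e)⁻¹) u z = 2 * ∑ x, G.lap μ u x * z x := by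
  have hswap : ∑ x, ∑ y, G.current μ u x y * z y = -∑ x, ∑ y, G.current μ u x y * z x := by
    rw [Finset.sum_comm, ← Finset.sum_neg_distrib]
    refine Finset.sum_congr rfl fun y _ => ?_
    rw [← Finset.sum_neg_distrib]
    exact Finset.sum_congr rfl fun x _ => by rw [current_swap, neg_mul]
  simp only [dirichletForm_inv_eq_sum_current, mul_sub, Finset.sum_sub_distrib, hswap,
    lap_eq_sum_current, Finset.sum_mul]
  ring

lemma dirichletForm_sum {ι : Type*} (s : Finset ι) (c : ι → G.E → ℝ) (u z : G.V → ℝ) :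
    G.dirichletForm (fun e => ∑ l ∈ s, c l e) u z = ∑ l ∈ s, G.dirichletForm (c l) u z := by
  have hterm : ∀ x y e, (if G.ends e = s(x, y) then
      (∑ l ∈ s, c l e) * (u x - u y) * (z x - z y) else 0) =
      ∑ l ∈ s, if G.ends e = s(x, y) then c l e * (u x - u y) * (z x - z y) else 0 := by
    intro x y e
    rw [Finset.sum_ite_irrel, Finset.sum_const_zero, Finset.sum_mul, Finset.sum_mul]
  simp only [dirichletForm, hterm]
  conv_rhs => rw [Finset.sum_comm]
  refine Finset.sum_congr rfl fun x _ => ?_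
  conv_rhs => rw [Finset.sum_comm]
  exact Finset.sum_congr rfl fun y _ => Finset.sum_comm

lemma dirichletForm_self_nonneg (hc : ∀ e, 0 ≤ c e) : 0 ≤ G.dirichletForm c u u :=
  Finset.sum_nonneg fun x _ => Finset.sum_nonneg fun y _ => Finset.sum_nonneg fun e _ => by
    split_ifs
    exacts [by rw [mul_assoc]; exact mul_nonneg (hc e) (mul_self_nonneg _), le_rfl]

lemma two_mul_dirichletForm_le {a b : G.E → ℝ} (ha : ∀ e, 0 ≤ a e) (hb : ∀ e, 0 ≤ b e)
    (hc : ∀ e, c e ^ 2 ≤ a e * b e) :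
    2 * G.dirichletForm c u z ≤ G.dirichletForm a u u + G.dirichletForm b z z := by
  simp only [dirichletForm, Finset.mul_sum, ← Finset.sum_add_distrib]
  gcongr with x _ y _ e _
  split_ifs
  · have := two_mul_mul_mul_le_of_sq_le (p := u x - u y) (q := z x - z y) (ha e) (hb e) (hc e)
    linear_combination this
  · simp

lemma dirichletForm_self_le {B : G.E → ℝ} (hB0 : ∀ e, 0 ≤ B e)
    (hB : ∀ e x y, G.ends e = s(x, y) → c e * (u x - u y) ^ 2 ≤ B e) :
    G.dirichletForm c u u ≤ 2 * ∑ e, B e :=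
  calc G.dirichletForm c u u ≤ ∑ x, ∑ y, ∑ e, if G.ends e = s(x, y) then B e else 0 := by
        unfold dirichletForm
        gcongr with x _ y _ e _
        split_ifs with he
        · exact (le_of_eq (by ring)).trans (hB e x y he)
        · exact le_rfl
    _ = ∑ e, ∑ x, ∑ y, if G.ends e = s(x, y) then B e else 0 :=
        (Finset.sum_congr rfl fun x _ => Finset.sum_comm).trans Finset.sum_comm
    _ ≤ ∑ e, 2 * B e := by gcongr with e; exact Sym2.sum_sum_ite_eq_mk_le _ (hB0 e)
    _ = 2 * ∑ e, B e := (Finset.mul_sum ..).symm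

end DirichletForm

section Green

variable {μ ν : G.E → ℝ} {v w D : G.V → ℝ}

lemma dirichletForm_inv_eq_of_lap_eq (hw : G.lap μ w = D) (z : G.V → ℝ) :
    G.dirichletForm (fun e => (μ e)⁻¹) w z = 2 * ∑ x, D x * z x := by
  rw [dirichletForm_inv_eq, hw]

lemma sum_mul_nonneg_of_lap_eq (hμ : ∀ e, 0 ≤ μ e) (hw : G.lap μ w = D) :
    0 ≤ ∑ x, D x * w x := by
  have h := dirichletForm_self_nonneg (u := w) fun e => inv_nonneg.2 (hμ e)
  rw [dirichletForm_inv_eq_of_lap_eq hw] at h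
  linarith

/-- Thomson's principle, for the current `I = (v i − v j) / ν(e)` of another network with the
same vertex currents `D`: its energy `Σ_e μ(e) I(e)²` in the network `μ` is at least `g(μ)`. -/
lemma two_mul_sum_mul_le_dirichletForm (hμ : ∀ e, 0 < μ e) (hw : G.lap μ w = D)
    (hv : G.lap ν v = D) :
    2 * ∑ x, D x * w x ≤ G.dirichletForm (fun e => μ e / ν e ^ 2) v v := by
  have hcs := two_mul_dirichletForm_le (c := fun e => (ν e)⁻¹) (u := v) (z := w)
    (a := fun e => μ e / ν e ^ 2) (b := fun e => (μ e)⁻¹)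
    (fun e => div_nonneg (hμ e).le (sq_nonneg _)) (fun e => (inv_pos.2 (hμ e)).le)
    (fun e => le_of_eq (by rw [div_mul_eq_mul_div, mul_inv_cancel₀ (hμ e).ne', one_div, inv_pow]))
  rw [dirichletForm_inv_eq_of_lap_eq hv, dirichletForm_inv_eq_of_lap_eq hw] at hcs
  linarith

lemma sum_sum_mul_le_sum_mul_of_lap_eq {ι : Type*} (s : Finset ι) {μ : ι → G.E → ℝ}
    (hμ : ∀ k ∈ s, ∀ e, 0 < μ k e) {w : ι → G.V → ℝ}
    (hv : G.lap (fun e => ∑ k ∈ s, μ k e) v = D) (hw : ∀ k ∈ s, G.lap (μ k) (w k) = D) :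
    ∑ k ∈ s, ∑ x, D x * w k x ≤ ∑ x, D x * v x := by
  have hsum : ∑ k ∈ s, G.dirichletForm (fun e => μ k e / (∑ l ∈ s, μ l e) ^ 2) v v =
      2 * ∑ x, D x * v x := by
    rw [← dirichletForm_sum, ← dirichletForm_inv_eq_of_lap_eq hv]
    congr 1
    funext e
    rw [← Finset.sum_div, sq, div_self_mul_self']
  have h := Finset.sum_le_sum fun k hk => two_mul_sum_mul_le_dirichletForm (hμ k hk) (hw k hk) hv
  rw [← Finset.mul_sum, hsum] at h
  linarith

lemma sum_mul_sub_sum_mul_le_of_lap_eq {ι : Type*} [DecidableEq ι] {s : Finset ι} {k : ι}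
    (hk : k ∈ s) {μ : ι → G.E → ℝ} (hμ : ∀ l ∈ s, ∀ e, 0 < μ l e)
    (hv : G.lap (fun e => ∑ l ∈ s, μ l e) v = D) (hw : G.lap (μ k) w = D) :
    ∑ x, D x * v x - ∑ x, D x * w x ≤
      (∑ x, max 0 (D x)) ^ 2 * ∑ l ∈ s.erase k, ∑ e, μ l e := by
  set M := ∑ x, max 0 (D x)
  have hthomson := two_mul_sum_mul_le_dirichletForm
    (fun e => Finset.sum_pos (fun l hl => hμ l hl e) ⟨k, hk⟩) hv hw
  have hsplit : G.dirichletForm (fun e => (∑ l ∈ s, μ l e) / μ k e ^ 2) w w =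
      2 * ∑ x, D x * w x + ∑ l ∈ s.erase k, G.dirichletForm (fun e => μ l e / μ k e ^ 2) w w := by
    simp only [Finset.sum_div]
    rw [dirichletForm_sum, ← Finset.add_sum_erase s _ hk, ← dirichletForm_inv_eq_of_lap_eq hw]
    congr 2
    funext e
    rw [sq, div_mul_cancel_left₀ (hμ k hk e).ne']
  have hedge : ∀ l ∈ s.erase k,
      G.dirichletForm (fun e => μ l e / μ k e ^ 2) w w ≤ 2 * (M ^ 2 * ∑ e, μ l e) := by
    intro l hl
    rw [Finset.mul_sum]
    refine dirichletForm_self_le (fun e => mul_nonneg (sq_nonneg M)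
      (hμ l (Finset.mem_of_mem_erase hl) e).le) fun e x y he => ?_
    calc μ l e / μ k e ^ 2 * (w x - w y) ^ 2 = μ l e * ((w x - w y) / μ k e) ^ 2 := by ring
      _ ≤ μ l e * M ^ 2 := mul_le_mul_of_nonneg_left
          (sq_div_le_sq_sum_posPart_of_lap_eq (fun e => (hμ k hk e).le) hw he)
          (hμ l (Finset.mem_of_mem_erase hl) e).le
      _ = M ^ 2 * μ l e := mul_comm _ _
  have hrest := Finset.sum_le_sum hedge
  rw [← Finset.mul_sum, ← Finset.mul_sum] at hrest
  linarith

end Green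

end RGraph

theorem stmt15_general (G : RGraph) (D : G.V → ℝ)
    (n : ℕ) (hn : 0 < n) (μ : Fin n → G.E → ℝ) (hμ : ∀ (k : Fin n) (e : G.E), 0 < μ k e)
    (v : G.V → ℝ) (hv : G.lap (fun e => ∑ k : Fin n, μ k e) v = D)
    (w : Fin n → G.V → ℝ) (hw : ∀ k : Fin n, G.lap (μ k) (w k) = D) :
    0 ≤ (∑ x : G.V, D x * v x) - (∑ k : Fin n, ∑ x : G.V, D x * w k x) ∧
    (∑ x : G.V, D x * v x) - (∑ k : Fin n, ∑ x : G.V, D x * w k x) ≤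
      (∑ x : G.V, max 0 (D x)) ^ 2 *
        Finset.univ.inf' ⟨⟨0, hn⟩, Finset.mem_univ _⟩
          (fun k : Fin n => ∑ l ∈ Finset.univ.erase k, ∑ e : G.E, μ l e) := by
  have hpos : ∀ k ∈ Finset.univ, ∀ e, 0 < μ k e := fun k _ => hμ k
  refine ⟨sub_nonneg.2 (RGraph.sum_sum_mul_le_sum_mul_of_lap_eq _ hpos hv fun k _ => hw k), ?_⟩
  obtain ⟨k, -, hk⟩ := Finset.exists_mem_eq_inf' ⟨⟨0, hn⟩, Finset.mem_univ _⟩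
    fun k : Fin n => ∑ l ∈ Finset.univ.erase k, ∑ e : G.E, μ l e
  have hrest : 0 ≤ ∑ l ∈ Finset.univ.erase k, ∑ x, D x * w l x :=
    Finset.sum_nonneg fun l _ => RGraph.sum_mul_nonneg_of_lap_eq (fun e => (hμ l e).le) (hw l)
  have hgap := RGraph.sum_mul_sub_sum_mul_le_of_lap_eq (Finset.mem_univ k) hpos hv (hw k)
  rw [hk, ← Finset.add_sum_erase _ _ (Finset.mem_univ k)]
  linarith

theorem stmt15 (G : RGraph) (hG : G.Connected) (D : G.V → ℝ) (hD : ∑ x : G.V, D x = 0)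
    (n : ℕ) (hn : 0 < n) (μ : Fin n → G.E → ℝ) (hμ : ∀ (k : Fin n) (e : G.E), 0 < μ k e)
    (v : G.V → ℝ) (hv : G.lap (fun e => ∑ k : Fin n, μ k e) v = D)
    (w : Fin n → G.V → ℝ) (hw : ∀ k : Fin n, G.lap (μ k) (w k) = D) :
    0 ≤ (∑ x : G.V, D x * v x) - (∑ k : Fin n, ∑ x : G.V, D x * w k x) ∧
    (∑ x : G.V, D x * v x) - (∑ k : Fin n, ∑ x : G.V, D x * w k x) ≤
      (∑ x : G.V, max 0 (D x)) ^ 2 *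
        Finset.univ.inf' ⟨⟨0, hn⟩, Finset.mem_univ _⟩
          (fun k : Fin n => ∑ l ∈ Finset.univ.erase k, ∑ e : G.E, μ l e) :=
  stmt15_general G D n hn μ hμ v hv w hw
end

section
/- Let Γ be a connected graph and let D, E ∈ ℝ^{Vert(Γ)} be zero-sum vectors. Then for all μ₁, …, μ_n ∈ ℝ_{>0}^{Ed(Γ)} one has |g(Γ, Σ_{i=1}^n μ_i; D, E) − Σ_{i=1}^n g(Γ, μ_i; D, E)| ≤ ‖D‖ · ‖E‖ · min_{i ∈ {1,…,n}} Σ_{j ≠ i} |μ_j|₁. -/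
open Classical
open scoped BigOperators

/-!
Write `ν = ∑ k, μ k` (resistances in series). For a zero-sum vector `X` with potentials `p` in
`(Γ, ν)` and `q k` in `(Γ, μ k)`, the defect `X ⬝ᵥ p - ∑ k, X ⬝ᵥ q k` is a quadratic form in `X`,
symmetric by reciprocity. Thomson's principle (a potential flow has the least energy among
currents with the same sources) gives both bounds on it: tested on the current of `ν` in each
network `μ k` it shows the defect is nonnegative, and tested on the current of `μ i` in `ν` it
bounds the defect by the energies of that current in the networks `μ l`, `l ≠ i`. Each edge of
a potential flow carries at most `‖X‖`, the current injected into an upper level set of the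
potential, so `0 ≤ defect X ≤ ‖X‖² ∑_{l ≠ i} |μ l|₁`, and Cauchy–Schwarz for this nonnegative
quadratic form bounds its polarization at `(D, E)`, which is
`g(Γ, ν; D, E) - ∑ k, g(Γ, μ k; D, E)`.
-/

open Finset

namespace RGraph

variable {G : RGraph}

namespace OEdge

@[simp] lemma rev_src (o : G.OEdge) : o.rev.src = o.tgt := rfl

@[simp] lemma rev_tgt (o : G.OEdge) : o.rev.tgt = o.src := rfl

@[simp] lemma rev_edge (o : G.OEdge) : o.rev.edge = o.edge := rfl

@[simp] lemma rev_rev (o : G.OEdge) : o.rev.rev = o := rfl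

lemma ends_eq (o : G.OEdge) : G.ends o.edge = s(o.src, o.tgt) := o.2

lemma ext' {o o' : G.OEdge} (he : o.edge = o'.edge) (hs : o.src = o'.src) (ht : o.tgt = o'.tgt) :
    o = o' :=
  Subtype.ext (Prod.ext he (Prod.ext hs ht))

lemma eq_orient_or_eq_rev_orient (o : G.OEdge) :
    o = G.orient o.edge ∨ o = (G.orient o.edge).rev := by
  have he := G.orient_edge o.edge
  have hends := o.ends_eq
  rw [← he, (G.orient o.edge).ends_eq, Sym2.eq_iff] at hends
  rcases hends with ⟨hs, ht⟩ | ⟨hs, ht⟩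
  · exact Or.inl (ext' he.symm hs.symm ht.symm)
  · exact Or.inr (ext' he.symm ht.symm hs.symm)

end OEdge

lemma sum_oedge_le_two_mul_sum (f : G.E → ℝ) (hf : ∀ e, 0 ≤ f e) :
    ∑ o : G.OEdge, f o.edge ≤ 2 * ∑ e, f e := by
  rw [← Finset.sum_fiberwise univ OEdge.edge, Finset.mul_sum]
  refine Finset.sum_le_sum fun e _ => ?_
  have hfiber : {o ∈ (univ : Finset G.OEdge) | o.edge = e} ⊆ {G.orient e, (G.orient e).rev} := by
    intro o ho
    rw [mem_filter] at ho
    rw [← ho.2]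
    simpa using o.eq_orient_or_eq_rev_orient
  calc _ = #{o ∈ (univ : Finset G.OEdge) | o.edge = e} • f e := by
        rw [← Finset.sum_const]
        exact Finset.sum_congr rfl fun o ho => by rw [(mem_filter.1 ho).2]
    _ ≤ 2 • f e := nsmul_le_nsmul_left (hf e) ((card_le_card hfiber).trans card_le_two)
    _ = 2 * f e := by rw [nsmul_eq_mul, Nat.cast_ofNat]

section Currents

variable {I : G.OEdge → ℝ} {X : G.V → ℝ}

lemma IsCurrent.sum_mul_rev (hI : G.IsCurrent I) (g : G.OEdge → ℝ) :
    ∑ o, I o * g o = -∑ o, I o * g o.rev := by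
  calc ∑ o, I o * g o = ∑ o : G.OEdge, I o.rev * g o.rev :=
        (Fintype.sum_equiv (Function.Involutive.toPerm _ OEdge.rev_rev) _ _
          fun _ => rfl).symm
    _ = -∑ o, I o * g o.rev := by
        rw [← Finset.sum_neg_distrib]
        exact Fintype.sum_congr _ _ fun o => by rw [hI o, neg_mul]

lemma Consistent.dotProduct_eq (hIX : G.Consistent I X) (u : G.V → ℝ) :
    X ⬝ᵥ u = ∑ o, I o * u o.src := by
  calc X ⬝ᵥ u = ∑ x, ∑ o ∈ univ with o.src = x, I o * u o.src :=
        Fintype.sum_congr _ _ fun x => by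
          rw [← hIX x, Finset.sum_mul]
          exact Finset.sum_congr rfl fun o ho => by rw [(mem_filter.1 ho).2]
    _ = ∑ o, I o * u o.src := Finset.sum_fiberwise _ _ _

lemma Consistent.two_mul_dotProduct (hI : G.IsCurrent I) (hIX : G.Consistent I X)
    (u : G.V → ℝ) : 2 * (X ⬝ᵥ u) = ∑ o, I o * (u o.src - u o.tgt) := by
  have h := hI.sum_mul_rev fun o => u o.src
  simp only [OEdge.rev_src] at h
  rw [hIX.dotProduct_eq]
  simp only [mul_sub, Finset.sum_sub_distrib]
  linarith

lemma Consistent.sum_eq_sum_outflow (hI : G.IsCurrent I) (hIX : G.Consistent I X)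
    (S : Finset G.V) :
    ∑ x ∈ S, X x = ∑ o ∈ univ with o.src ∈ S ∧ o.tgt ∉ S, I o := by
  set χ : G.V → ℝ := fun x => if x ∈ S then 1 else 0
  have hinside : ∑ o, I o * (χ o.src * χ o.tgt) = 0 := by
    have h := hI.sum_mul_rev fun o => χ o.src * χ o.tgt
    have hswap : ∀ o : G.OEdge, χ o.tgt * χ o.src = χ o.src * χ o.tgt := fun o => mul_comm _ _
    simp only [OEdge.rev_src, OEdge.rev_tgt, hswap] at h
    linarith
  calc ∑ x ∈ S, X x = X ⬝ᵥ χ := by simp [χ, dotProduct, Finset.sum_ite_mem]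
    _ = ∑ o, I o * (χ o.src * χ o.tgt) + ∑ o, I o * (χ o.src * (1 - χ o.tgt)) := by
        rw [hIX.dotProduct_eq, ← Finset.sum_add_distrib]
        exact Fintype.sum_congr _ _ fun o => by ring
    _ = ∑ o ∈ univ with o.src ∈ S ∧ o.tgt ∉ S, I o := by
        rw [hinside, zero_add, Finset.sum_filter]
        exact Fintype.sum_congr _ _ fun o => by
          by_cases hs : o.src ∈ S <;> by_cases ht : o.tgt ∈ S <;> simp [χ, hs, ht]

end Currents

noncomputable def flow (μ : G.E → ℝ) (v : G.V → ℝ) (o : G.OEdge) : ℝ :=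
  (v o.src - v o.tgt) / μ o.edge

/-- Counts every edge once per orientation: twice `G.power μ I` when `I` is a current. -/
noncomputable def energy (μ : G.E → ℝ) (I : G.OEdge → ℝ) : ℝ :=
  ∑ o, μ o.edge * I o ^ 2

section Flow

variable (μ : G.E → ℝ)

lemma isCurrent_flow (v : G.V → ℝ) : G.IsCurrent (G.flow μ v) := fun o => by
  simp only [flow, OEdge.rev_src, OEdge.rev_tgt, OEdge.rev_edge, ← neg_div, neg_sub]

lemma lap_apply (v : G.V → ℝ) (i : G.V) :
    G.lap μ v i = ∑ o ∈ univ with o.src = i, G.flow μ v o := by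
  rw [lap, ← Fintype.sum_prod_type', ← Finset.sum_filter]
  refine Finset.sum_bij' (fun p hp => ⟨(p.2, i, p.1), (mem_filter.1 hp).2⟩)
    (fun o _ => (o.tgt, o.edge)) (fun _ _ => mem_filter.2 ⟨mem_univ _, rfl⟩)
    (fun o ho => mem_filter.2 ⟨mem_univ _, (mem_filter.1 ho).2 ▸ o.ends_eq⟩)
    (fun _ _ => rfl) (fun o ho => OEdge.ext' rfl (mem_filter.1 ho).2.symm rfl) fun _ _ => rfl

lemma consistent_flow (v : G.V → ℝ) : G.Consistent (G.flow μ v) (G.lap μ v) :=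
  fun i => (lap_apply μ v i).symm

lemma two_mul_lap_dotProduct (u v : G.V → ℝ) :
    2 * (G.lap μ v ⬝ᵥ u) = ∑ o, G.flow μ v o * (u o.src - u o.tgt) :=
  (consistent_flow μ v).two_mul_dotProduct (isCurrent_flow μ v) u

lemma lap_dotProduct_comm (u v : G.V → ℝ) : G.lap μ v ⬝ᵥ u = G.lap μ u ⬝ᵥ v := by
  have h : ∑ o, G.flow μ v o * (u o.src - u o.tgt) = ∑ o, G.flow μ u o * (v o.src - v o.tgt) :=
    Fintype.sum_congr _ _ fun o => by simp only [flow]; ring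
  linarith [two_mul_lap_dotProduct μ u v, two_mul_lap_dotProduct μ v u]

lemma energy_flow (v : G.V → ℝ) : G.energy μ (G.flow μ v) = 2 * (G.lap μ v ⬝ᵥ v) := by
  rw [two_mul_lap_dotProduct]
  refine Fintype.sum_congr _ _ fun o => ?_
  rcases eq_or_ne (μ o.edge) 0 with h | h
  · simp [flow, h]
  · simp only [flow]
    field_simp

lemma lap_add (u v : G.V → ℝ) : G.lap μ (u + v) = G.lap μ u + G.lap μ v := by
  ext i
  simp only [lap_apply, flow, Pi.add_apply, ← Finset.sum_add_distrib, add_sub_add_comm, add_div]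

lemma lap_smul (t : ℝ) (v : G.V → ℝ) : G.lap μ (t • v) = t • G.lap μ v := by
  ext i
  simp only [lap_apply, flow, Pi.smul_apply, smul_eq_mul, Finset.mul_sum, ← mul_sub, mul_div_assoc]

noncomputable def lapLinearMap : (G.V → ℝ) →ₗ[ℝ] G.V → ℝ where
  toFun := G.lap μ
  map_add' := lap_add μ
  map_smul' := lap_smul μ

lemma sum_lap (v : G.V → ℝ) : ∑ x, G.lap μ v x = 0 := by
  have h := two_mul_lap_dotProduct μ 1 v
  simp only [Pi.one_apply, sub_self, mul_zero, Finset.sum_const_zero] at h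
  simpa [dotProduct] using h

variable {μ}

lemma flow_le_sum_posPart (hμ : ∀ e, 0 < μ e) (v : G.V → ℝ) (o : G.OEdge) :
    G.flow μ v o ≤ ∑ x, max 0 (G.lap μ v x) := by
  have hpos : 0 ≤ ∑ x, max 0 (G.lap μ v x) := Finset.sum_nonneg fun x _ => le_max_left _ _
  by_cases hdrop : v o.tgt < v o.src
  swap
  · exact (div_nonpos_of_nonpos_of_nonneg (by linarith) (hμ _).le).trans hpos
  -- every current leaving the upper level set `S` of `v` runs downhill, and `o` is one of them
  set S : Finset G.V := {x | v o.src ≤ v x}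
  have hout : ∀ o' ∈ ({o' | o'.src ∈ S ∧ o'.tgt ∉ S} : Finset G.OEdge),
      0 ≤ G.flow μ v o' := fun o' ho' => by
    simp only [S, mem_filter, mem_univ, true_and, not_le] at ho'
    exact div_nonneg (by linarith) (hμ _).le
  calc G.flow μ v o ≤ ∑ o' ∈ univ with o'.src ∈ S ∧ o'.tgt ∉ S, G.flow μ v o' :=
        Finset.single_le_sum hout (by simp [S, hdrop])
    _ = ∑ x ∈ S, G.lap μ v x :=
        ((consistent_flow μ v).sum_eq_sum_outflow (isCurrent_flow μ v) S).symm
    _ ≤ ∑ x ∈ S, max 0 (G.lap μ v x) := Finset.sum_le_sum fun x _ => le_max_right _ _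
    _ ≤ ∑ x, max 0 (G.lap μ v x) :=
        Finset.sum_le_sum_of_subset_of_nonneg (subset_univ S) fun x _ _ => le_max_left _ _

lemma abs_flow_le_sum_posPart (hμ : ∀ e, 0 < μ e) (v : G.V → ℝ) (o : G.OEdge) :
    |G.flow μ v o| ≤ ∑ x, max 0 (G.lap μ v x) := by
  have h := flow_le_sum_posPart hμ v o.rev
  rw [isCurrent_flow μ v o] at h
  exact abs_le.2 ⟨by linarith, flow_le_sum_posPart hμ v o⟩

lemma energy_flow_le (hμ : ∀ e, 0 < μ e) {J : G.OEdge → ℝ} (hJ : G.IsCurrent J)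
    (v : G.V → ℝ) (hJv : G.Consistent J (G.lap μ v)) :
    G.energy μ (G.flow μ v) ≤ G.energy μ J := by
  have hcross : ∑ o, μ o.edge * J o * G.flow μ v o = 2 * (G.lap μ v ⬝ᵥ v) := by
    rw [hJv.two_mul_dotProduct hJ]
    exact Fintype.sum_congr _ _ fun o => by
      simp only [flow]
      field_simp [(hμ o.edge).ne']
  have hsq : 0 ≤ ∑ o, μ o.edge * (J o - G.flow μ v o) ^ 2 :=
    Finset.sum_nonneg fun o _ => mul_nonneg (hμ _).le (sq_nonneg _)
  have hexpand : ∑ o, μ o.edge * (J o - G.flow μ v o) ^ 2 =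
      G.energy μ J - 2 * ∑ o, μ o.edge * J o * G.flow μ v o + G.energy μ (G.flow μ v) := by
    simp only [energy, Finset.mul_sum, ← Finset.sum_sub_distrib, ← Finset.sum_add_distrib]
    exact Fintype.sum_congr _ _ fun o => by ring
  rw [hexpand, hcross, energy_flow] at hsq
  rw [energy_flow]
  linarith

end Flow

lemma lap_dotProduct_self_nonneg {μ : G.E → ℝ} (hμ : ∀ e, 0 ≤ μ e) (v : G.V → ℝ) :
    0 ≤ G.lap μ v ⬝ᵥ v := by
  have h : 0 ≤ G.energy μ (G.flow μ v) :=
    Finset.sum_nonneg fun o _ => mul_nonneg (hμ _) (sq_nonneg _)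
  rw [energy_flow] at h
  linarith

lemma energy_le {μ : G.E → ℝ} (hμ : ∀ e, 0 ≤ μ e) {I : G.OEdge → ℝ} {C : ℝ}
    (hI : ∀ o, |I o| ≤ C) : G.energy μ I ≤ 2 * C ^ 2 * ∑ e, μ e := by
  calc G.energy μ I ≤ ∑ o : G.OEdge, μ o.edge * C ^ 2 :=
        Finset.sum_le_sum fun o _ => mul_le_mul_of_nonneg_left (sq_le_sq.2 ((hI o).trans
          (le_abs_self C))) (hμ _)
    _ ≤ 2 * ∑ e, μ e * C ^ 2 :=
        sum_oedge_le_two_mul_sum (fun e => μ e * C ^ 2) fun e => mul_nonneg (hμ e) (sq_nonneg C)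
    _ = 2 * C ^ 2 * ∑ e, μ e := by rw [← Finset.sum_mul]; ring

lemma eq_of_lap_eq_zero (hG : G.Connected) {μ : G.E → ℝ} (hμ : ∀ e, 0 < μ e)
    {v : G.V → ℝ} (hv : G.lap μ v = 0) (i j : G.V) : v i = v j := by
  have hflat : ∀ o : G.OEdge, v o.src = v o.tgt := by
    have h := energy_flow μ v
    rw [hv, zero_dotProduct, mul_zero, energy, Finset.sum_eq_zero_iff_of_nonneg
      fun o _ => mul_nonneg (hμ _).le (sq_nonneg _)] at h
    intro o
    simpa [flow, (hμ o.edge).ne', sub_eq_zero] using h o (mem_univ o)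
  induction hG i j with
  | rel x y hxy =>
    obtain ⟨e, -, he⟩ := hxy
    exact hflat ⟨(e, x, y), he⟩
  | refl => rfl
  | symm _ _ _ ih => exact ih.symm
  | trans _ _ _ _ _ ih₁ ih₂ => exact ih₁.trans ih₂

lemma exists_lap_eq (hG : G.Connected) {μ : G.E → ℝ} (hμ : ∀ e, 0 < μ e) {X : G.V → ℝ}
    (hX : ∑ x, X x = 0) : ∃ v, G.lap μ v = X := by
  -- rank–nullity: the kernel consists of the constants, so the range is all of `{∑ x = 0}`
  cases isEmpty_or_nonempty G.V
  · exact ⟨0, funext fun x => isEmptyElim x⟩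
  obtain ⟨x₀⟩ := ‹Nonempty G.V›
  let σ : (G.V → ℝ) →ₗ[ℝ] ℝ := ∑ x, LinearMap.proj x
  have hσ : ∀ u, σ u = ∑ x, u x := fun u => by simp [σ]
  have hkerL : Module.finrank ℝ (LinearMap.ker (lapLinearMap (G := G) μ)) ≤ 1 := by
    refine (Submodule.finrank_mono fun d hd => ?_).trans_eq (finrank_span_singleton one_ne_zero)
    refine Submodule.mem_span_singleton.2 ⟨d x₀, funext fun x => ?_⟩
    simp [eq_of_lap_eq_zero hG hμ (LinearMap.mem_ker.1 hd) x x₀]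
  have hrangeσ : Module.finrank ℝ (LinearMap.range σ) = 1 := by
    rw [LinearMap.range_eq_top.2 fun r => ⟨Pi.single x₀ r, by simp [hσ]⟩, finrank_top,
      Module.finrank_self]
  have hrange : LinearMap.range (lapLinearMap μ) = LinearMap.ker σ := by
    refine Submodule.eq_of_le_of_finrank_le ?_ ?_
    · rintro _ ⟨u, rfl⟩
      exact (hσ _).trans (sum_lap μ u)
    · have := (lapLinearMap (G := G) μ).finrank_range_add_finrank_ker
      have := σ.finrank_range_add_finrank_ker
      omega
  obtain ⟨v, hv⟩ : X ∈ LinearMap.range (lapLinearMap μ) := hrange ▸ (hσ X).trans hX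
  exact ⟨v, hv⟩

lemma sq_le_mul_of_forall_quadratic_nonneg {a b c : ℝ}
    (h : ∀ t, 0 ≤ a + 2 * b * t + c * t ^ 2) : b ^ 2 ≤ a * c := by
  have := discrim_le_zero fun t => (h t).trans_eq (by ring : _ = c * (t * t) + 2 * b * t + a)
  rw [discrim] at this
  linarith

section Series

variable {ι : Type*} [Fintype ι] {μ : ι → G.E → ℝ}

lemma sum_energy (I : G.OEdge → ℝ) :
    ∑ k, G.energy (μ k) I = G.energy (fun e => ∑ k, μ k e) I := by
  simp only [energy, Finset.sum_mul]
  exact Finset.sum_comm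

lemma sum_dotProduct_le (hμ : ∀ k e, 0 < μ k e) {X p : G.V → ℝ} {q : ι → G.V → ℝ}
    (hp : G.lap (fun e => ∑ k, μ k e) p = X) (hq : ∀ k, G.lap (μ k) (q k) = X) :
    ∑ k, X ⬝ᵥ q k ≤ X ⬝ᵥ p := by
  have hJ : G.Consistent (G.flow _ p) X := hp ▸ consistent_flow _ p
  have hk : ∀ k, 2 * (X ⬝ᵥ q k) ≤ G.energy (μ k) (G.flow _ p) := fun k => by
    have h := energy_flow_le (hμ k) (isCurrent_flow _ p) (q k) ((hq k).symm ▸ hJ)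
    rwa [energy_flow, hq k] at h
  have h := Finset.sum_le_sum fun k (_ : k ∈ univ) => hk k
  rw [sum_energy, energy_flow, hp, ← Finset.mul_sum] at h
  linarith

lemma dotProduct_sub_sum_le [DecidableEq ι] (hμ : ∀ k e, 0 < μ k e) {X p : G.V → ℝ}
    {q : ι → G.V → ℝ} (hp : G.lap (fun e => ∑ k, μ k e) p = X)
    (hq : ∀ k, G.lap (μ k) (q k) = X) (i : ι) :
    X ⬝ᵥ p - ∑ k, X ⬝ᵥ q k ≤
      (∑ x, max 0 (X x)) ^ 2 * ∑ l ∈ univ.erase i, ∑ e, μ l e := by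
  have hν : ∀ e, 0 < ∑ k, μ k e := fun e => Finset.sum_pos (fun k _ => hμ k e) ⟨i, mem_univ i⟩
  have hJ : G.Consistent (G.flow (μ i) (q i)) X := hq i ▸ consistent_flow _ (q i)
  -- Thomson's principle in the series network, tested on the current of network `i` alone
  have hthomson : 2 * (X ⬝ᵥ p) ≤
      2 * (X ⬝ᵥ q i) + ∑ l ∈ univ.erase i, G.energy (μ l) (G.flow (μ i) (q i)) := by
    have h := energy_flow_le hν (isCurrent_flow _ (q i)) p (hp.symm ▸ hJ)
    rwa [energy_flow, hp, ← sum_energy, ← Finset.add_sum_erase _ _ (mem_univ i), energy_flow,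
      hq i] at h
  have hcross : ∀ l, G.energy (μ l) (G.flow (μ i) (q i)) ≤
      2 * (∑ x, max 0 (X x)) ^ 2 * ∑ e, μ l e := fun l =>
    energy_le (fun e => (hμ l e).le) fun o => hq i ▸ abs_flow_le_sum_posPart (hμ i) (q i) o
  have hrest : 0 ≤ ∑ l ∈ univ.erase i, X ⬝ᵥ q l := Finset.sum_nonneg fun l _ =>
    hq l ▸ lap_dotProduct_self_nonneg (fun e => (hμ l e).le) (q l)
  have := Finset.sum_le_sum fun l (_ : l ∈ univ.erase i) => hcross l
  rw [← Finset.add_sum_erase _ _ (mem_univ i)]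
  simp only [← Finset.mul_sum] at this
  linarith

lemma sq_dotProduct_sub_sum_le (hμ : ∀ k e, 0 < μ k e) {D E a v : G.V → ℝ}
    {b w : ι → G.V → ℝ} (ha : G.lap (fun e => ∑ k, μ k e) a = D)
    (hb : ∀ k, G.lap (μ k) (b k) = D) (hv : G.lap (fun e => ∑ k, μ k e) v = E)
    (hw : ∀ k, G.lap (μ k) (w k) = E) :
    (D ⬝ᵥ v - ∑ k, D ⬝ᵥ w k) ^ 2 ≤ (D ⬝ᵥ a - ∑ k, D ⬝ᵥ b k) * (E ⬝ᵥ v - ∑ k, E ⬝ᵥ w k) := by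
  have hEa : E ⬝ᵥ a = D ⬝ᵥ v := by rw [← ha, ← hv, lap_dotProduct_comm]
  have hEb : ∀ k, E ⬝ᵥ b k = D ⬝ᵥ w k := fun k => by rw [← hb k, ← hw k, lap_dotProduct_comm]
  refine sq_le_mul_of_forall_quadratic_nonneg fun t => ?_
  have h := sum_dotProduct_le hμ (X := D + t • E) (p := a + t • v) (q := fun k => b k + t • w k)
    (by rw [lap_add, lap_smul, ha, hv]) fun k => by rw [lap_add, lap_smul, hb, hw]
  simp only [add_dotProduct, dotProduct_add, smul_dotProduct, dotProduct_smul, smul_eq_mul,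
    Finset.sum_add_distrib, ← Finset.mul_sum, hEa, hEb] at h
  linear_combination h

end Series

end RGraph

theorem stmt16_general (G : RGraph) (hG : G.Connected) (D E : G.V → ℝ)
    (hD : ∑ x : G.V, D x = 0)
    (n : ℕ) (hn : 0 < n) (μ : Fin n → G.E → ℝ) (hμ : ∀ (k : Fin n) (e : G.E), 0 < μ k e)
    (v : G.V → ℝ) (hv : G.lap (fun e => ∑ k : Fin n, μ k e) v = E)
    (w : Fin n → G.V → ℝ) (hw : ∀ k : Fin n, G.lap (μ k) (w k) = E) :
    |(∑ x : G.V, D x * v x) - (∑ k : Fin n, ∑ x : G.V, D x * w k x)| ≤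
      (∑ x : G.V, max 0 (D x)) * (∑ x : G.V, max 0 (E x)) *
        Finset.univ.inf' ⟨⟨0, hn⟩, Finset.mem_univ _⟩
          (fun k : Fin n => ∑ l ∈ Finset.univ.erase k, ∑ e : G.E, μ l e) := by
  have hν : ∀ e, 0 < ∑ k, μ k e := fun e => Finset.sum_pos (fun k _ => hμ k e) ⟨⟨0, hn⟩, mem_univ _⟩
  obtain ⟨a, ha⟩ := G.exists_lap_eq hG hν hD
  choose b hb using fun k => G.exists_lap_eq hG (hμ k) hD
  obtain ⟨i, -, hi⟩ := Finset.exists_mem_eq_inf' ⟨⟨0, hn⟩, mem_univ _⟩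
    fun k : Fin n => ∑ l ∈ univ.erase k, ∑ e, μ l e
  have hM : 0 ≤ ∑ l ∈ univ.erase i, ∑ e, μ l e :=
    Finset.sum_nonneg fun l _ => Finset.sum_nonneg fun e _ => (hμ l e).le
  rw [hi]
  refine abs_le_of_sq_le_sq ?_ (by positivity)
  calc _ ≤ _ := RGraph.sq_dotProduct_sub_sum_le hμ ha hb hv hw
    _ ≤ _ := mul_le_mul (RGraph.dotProduct_sub_sum_le hμ ha hb i)
        (RGraph.dotProduct_sub_sum_le hμ hv hw i)
        (sub_nonneg.2 (RGraph.sum_dotProduct_le hμ hv hw)) (by positivity)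
    _ = _ := by ring

theorem stmt16 (G : RGraph) (hG : G.Connected) (D E : G.V → ℝ)
    (hD : ∑ x : G.V, D x = 0) (hE : ∑ x : G.V, E x = 0)
    (n : ℕ) (hn : 0 < n) (μ : Fin n → G.E → ℝ) (hμ : ∀ (k : Fin n) (e : G.E), 0 < μ k e)
    (v : G.V → ℝ) (hv : G.lap (fun e => ∑ k : Fin n, μ k e) v = E)
    (w : Fin n → G.V → ℝ) (hw : ∀ k : Fin n, G.lap (μ k) (w k) = E) :
    |(∑ x : G.V, D x * v x) - (∑ k : Fin n, ∑ x : G.V, D x * w k x)| ≤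
      (∑ x : G.V, max 0 (D x)) * (∑ x : G.V, max 0 (E x)) *
        Finset.univ.inf' ⟨⟨0, hn⟩, Finset.mem_univ _⟩
          (fun k : Fin n => ∑ l ∈ Finset.univ.erase k, ∑ e : G.E, μ l e) :=
  stmt16_general G hG D E hD n hn μ hμ v hv w hw
end
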